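/- arXiv:1808.04743 — 5 statements merged into one kernel-verified Lean document; each statement's English description precedes it below -/
import Mathlib

section
/- For positive integers D and real x with 0 < x < 1, the identity (-1)^{D/2} ∑_{ℓ=D/2+1}^∞ C(ℓ+D/2, D/2) C(ℓ-1, D/2) x^ℓ = (-1/(1-x)^{D+1}) ∑_{ℓ=D/2+1}^{D+1} (-1)^ℓ C(D+1, ℓ) x^ℓ holds, where D is even. -/
/-!
For `m = D / 2` the coefficient `f n = C(n + 2m + 1, m) * C(n + m, m)` is a polynomial of degree
`2m` in `n`, so `(1 - x)^(2m+1) * ∑ f n * x^n` has coefficients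
`∑_{j ≤ n} (-1)^j C(2m+1, j) f(n-j)`.
The `(2m+1)`-st finite difference of `f` vanishes, so each of these truncated alternating sums is
minus its complementary tail, which only samples `f` at `-1, …, -(2m+1)`. There `f` vanishes except
at `-(m+1)`, where it equals `(-1)^m`, and the tail collapses to a single binomial coefficient.
-/

open Finset Polynomial

theorem tsum_nat_add_eq_sum_Icc {M : Type*} [AddCommMonoid M] [TopologicalSpace M] {g : ℕ → M}
    {N : ℕ} (hg : ∀ ℓ, N < ℓ → g ℓ = 0) (r : ℕ) :
    ∑' n : ℕ, g (n + r) = ∑ ℓ ∈ Icc r N, g ℓ := by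
  rw [tsum_eq_sum (s := range (N + 1 - r)) fun n hn ↦ hg _ (by simp at hn; omega),
    ← Ico_add_one_right_eq_Icc, sum_Ico_eq_sum_range]
  simp_rw [add_comm r]

namespace Polynomial

section CommRing

variable {R : Type*} [CommRing R]

theorem sum_range_alternating_choose_mul_eval_sub {P : R[X]} {N : ℕ} (hP : P.natDegree < N)
    (y : R) : ∑ j ∈ range (N + 1), (-1) ^ j * (N.choose j : R) * P.eval (y - j) = 0 := by
  have h := congr_fun (fwdDiff_iter_eq_zero_of_degree_lt hP) (y - N)
  rw [fwdDiff_iter_eq_sum_shift, ← sum_range_reflect, Pi.zero_apply] at h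
  rw [← h]
  refine sum_congr rfl fun j hj ↦ ?_
  have hj : j ≤ N := Nat.lt_succ_iff.mp (mem_range.mp hj)
  rw [Nat.add_sub_cancel, Nat.sub_sub_self hj, Nat.choose_symm hj, zsmul_eq_mul, nsmul_eq_mul,
    Nat.cast_sub hj]
  push_cast
  ring_nf

theorem sum_range_alternating_choose_mul_eval_sub_eq_neg {P : R[X]} {N : ℕ}
    (hP : P.natDegree < N) (n : ℕ) :
    ∑ j ∈ range (n + 1), (-1) ^ j * (N.choose j : R) * P.eval ((n : R) - j) =
      -∑ i ∈ range N,
        (-1) ^ (n + 1 + i) * (N.choose (n + 1 + i) : R) * P.eval (-((i : R) + 1)) := by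
  have hfull := sum_range_alternating_choose_mul_eval_sub hP (n : R)
  rw [sum_subset (range_subset_range.mpr (by omega : N + 1 ≤ n + 1 + N)) fun j _ hj ↦ by
      rw [Nat.choose_eq_zero_of_lt (by simpa using hj)]; simp, sum_range_add] at hfull
  rw [eq_neg_iff_add_eq_zero, ← hfull]
  congr 1
  refine sum_congr rfl fun i _ ↦ ?_
  push_cast
  ring_nf

theorem sum_range_alternating_choose_mul_eval_sub_of_eval_neg_eq_zero {P : R[X]} {N r : ℕ}
    (hP : P.natDegree < N) (hr : 0 < r)
    (hroots : ∀ i ∈ Icc 1 N, i ≠ r → P.eval (-(i : R)) = 0) (n : ℕ) :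
    ∑ j ∈ range (n + 1), (-1) ^ j * (N.choose j : R) * P.eval ((n : R) - j) =
      -(P.eval (-(r : R)) * ((-1) ^ (n + r) * (N.choose (n + r) : R))) := by
  rw [sum_range_alternating_choose_mul_eval_sub_eq_neg hP, sum_eq_single (r - 1)]
  · rw [show n + 1 + (r - 1) = n + r by omega, show ((r - 1 : ℕ) : R) + 1 = r by
      rw [Nat.cast_sub hr, Nat.cast_one]; ring]
    ring
  · intro i hi hir
    have hroot := hroots (i + 1) (by simp at hi ⊢; omega) (by omega)
    push_cast at hroot
    rw [hroot, mul_zero]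
  · intro hr'
    rw [Nat.choose_eq_zero_of_lt (by simp at hr'; omega)]
    simp

end CommRing

section NormedCommRing

variable {R : Type*} [NormedCommRing R]

theorem summable_norm_eval_mul_geometric (P : R[X]) {x : R} (hx : ‖x‖ < 1) :
    Summable fun n : ℕ ↦ ‖P.eval (n : R) * x ^ n‖ := by
  have hsum : Summable fun n : ℕ ↦
      ∑ i ∈ range (P.natDegree + 1), ‖P.coeff i‖ * ‖(n : R) ^ i * x ^ n‖ :=
    summable_sum fun i _ ↦ (summable_norm_pow_mul_geometric_of_norm_lt_one i hx).mul_left _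
  refine hsum.of_nonneg_of_le (fun _ ↦ norm_nonneg _) fun n ↦ ?_
  rw [eval_eq_sum_range, sum_mul]
  refine (norm_sum_le _ _).trans (sum_le_sum fun i _ ↦ ?_)
  rw [mul_assoc]
  exact norm_mul_le _ _

variable [CompleteSpace R]

theorem one_sub_pow_mul_tsum_eval_mul_pow (P : R[X]) (N : ℕ) {x : R} (hx : ‖x‖ < 1) :
    (1 - x) ^ N * ∑' n : ℕ, P.eval (n : R) * x ^ n =
      ∑' n : ℕ, (∑ j ∈ range (n + 1), (-1) ^ j * (N.choose j : R) * P.eval ((n : R) - j)) *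
        x ^ n := by
  set g : ℕ → R := fun j ↦ (-1) ^ j * (N.choose j : R) * x ^ j
  have hg0 : ∀ j ∉ range (N + 1), g j = 0 := fun j hj ↦ by
    simp [g, Nat.choose_eq_zero_of_lt (by simpa using hj : N < j)]
  have hg : ∑' j, g j = (1 - x) ^ N := by
    rw [tsum_eq_sum hg0, sub_eq_neg_add, add_pow]
    refine sum_congr rfl fun j _ ↦ ?_
    rw [one_pow, neg_pow]
    ring
  rw [← hg, tsum_mul_tsum_eq_tsum_sum_range_of_summable_norm
    (summable_of_ne_finset_zero fun j hj ↦ by rw [hg0 j hj, norm_zero])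
    (P.summable_norm_eval_mul_geometric hx)]
  refine tsum_congr fun n ↦ ?_
  rw [sum_mul]
  refine sum_congr rfl fun j hj ↦ ?_
  have hj : j ≤ n := Nat.lt_succ_iff.mp (mem_range.mp hj)
  rw [Nat.cast_sub hj, ← Nat.add_sub_cancel' hj, pow_add, Nat.add_sub_cancel_left]
  ring

end NormedCommRing

theorem pow_mul_one_sub_pow_mul_tsum_eval_mul_pow {𝕜 : Type*} [NormedField 𝕜] [CompleteSpace 𝕜]
    {P : 𝕜[X]} {N r : ℕ} (hP : P.natDegree < N) (hr : 0 < r)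
    (hroots : ∀ i ∈ Icc 1 N, i ≠ r → P.eval (-(i : 𝕜)) = 0) {x : 𝕜} (hx : ‖x‖ < 1) :
    x ^ r * ((1 - x) ^ N * ∑' n : ℕ, P.eval (n : 𝕜) * x ^ n) =
      -P.eval (-(r : 𝕜)) * ∑ ℓ ∈ Icc r N, (-1) ^ ℓ * (N.choose ℓ : 𝕜) * x ^ ℓ := by
  have hvanish : ∀ ℓ, N < ℓ → (-1) ^ ℓ * (N.choose ℓ : 𝕜) * x ^ ℓ = 0 := fun ℓ hℓ ↦ by
    simp [Nat.choose_eq_zero_of_lt hℓ]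
  rw [one_sub_pow_mul_tsum_eval_mul_pow P N hx, ← tsum_nat_add_eq_sum_Icc hvanish,
    ← tsum_mul_left, ← tsum_mul_left]
  refine tsum_congr fun n ↦ ?_
  rw [sum_range_alternating_choose_mul_eval_sub_of_eval_neg_eq_zero hP hr hroots, pow_add]
  ring

/-- `(m!)² * C(t + 2m + 1, m) * C(t + m, m)` as a polynomial in `t`. -/
noncomputable def choosePairPoly (m : ℕ) : ℝ[X] :=
  (descPochhammer ℝ m).comp (X + C ((2 * m + 1 : ℕ) : ℝ)) *
    (descPochhammer ℝ m).comp (X + C (m : ℝ))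

theorem natDegree_choosePairPoly_lt (m : ℕ) : (choosePairPoly m).natDegree < 2 * m + 1 := by
  have hcomp : ∀ c : ℝ, ((descPochhammer ℝ m).comp (X + C c)).natDegree = m := fun c ↦ by
    rw [natDegree_comp, descPochhammer_natDegree, natDegree_X_add_C, mul_one]
  have := natDegree_mul_le (p := (descPochhammer ℝ m).comp (X + C ((2 * m + 1 : ℕ) : ℝ)))
    (q := (descPochhammer ℝ m).comp (X + C (m : ℝ)))
  rw [hcomp, hcomp] at this
  exact this.trans_lt (by omega)

theorem choosePairPoly_eval_natCast (m k : ℕ) :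
    (choosePairPoly m).eval (k : ℝ) =
      (m.factorial : ℝ) ^ 2 * (((k + (2 * m + 1)).choose m : ℝ) * ((k + m).choose m : ℝ)) := by
  simp only [choosePairPoly, eval_mul, eval_comp, eval_add, eval_X, eval_C, ← Nat.cast_add,
    descPochhammer_eval_eq_descFactorial, Nat.descFactorial_eq_factorial_mul_choose]
  push_cast
  ring

theorem choosePairPoly_eval_neg (m : ℕ) :
    ∀ i ∈ Icc 1 (2 * m + 1), i ≠ m + 1 → (choosePairPoly m).eval (-(i : ℝ)) = 0 := by
  intro i hi him
  rw [mem_Icc] at hi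
  simp only [choosePairPoly, eval_mul, eval_comp, eval_add, eval_X, eval_C]
  rcases lt_or_gt_of_ne him with hlt | hgt
  · rw [show -(i : ℝ) + m = ((m - i : ℕ) : ℝ) by rw [Nat.cast_sub (by omega)]; ring,
      descPochhammer_eval_coe_nat_of_lt (by omega), mul_zero]
  · rw [show -(i : ℝ) + ((2 * m + 1 : ℕ) : ℝ) = ((2 * m + 1 - i : ℕ) : ℝ) by
      rw [Nat.cast_sub hi.2]; ring, descPochhammer_eval_coe_nat_of_lt (by omega), zero_mul]

theorem choosePairPoly_eval_neg_succ (m : ℕ) :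
    (choosePairPoly m).eval (-((m + 1 : ℕ) : ℝ)) = (-1) ^ m * (m.factorial : ℝ) ^ 2 := by
  simp only [choosePairPoly, eval_mul, eval_comp, eval_add, eval_X, eval_C]
  rw [show -((m + 1 : ℕ) : ℝ) + ((2 * m + 1 : ℕ) : ℝ) = (m : ℝ) by push_cast; ring,
    show -((m + 1 : ℕ) : ℝ) + m = -1 by push_cast; ring, descPochhammer_eval_eq_descFactorial,
    Nat.descFactorial_self, descPochhammer_eval_eq_prod_range]
  have hprod : ∏ j ∈ range m, (-1 - (j : ℝ)) = (-1) ^ m * m.factorial := by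
    rw [← prod_range_add_one_eq_factorial, Nat.cast_prod,
      show (-1 : ℝ) ^ m = ∏ _j ∈ range m, (-1 : ℝ) by simp, ← prod_mul_distrib]
    refine prod_congr rfl fun j _ ↦ ?_
    push_cast
    ring
  rw [hprod]
  ring

end Polynomial

theorem stmt_6_general (D : ℕ) (hEven : Even D) (x : ℝ) (hx0 : 0 < x) (hx1 : x < 1) :
    (-1 : ℝ) ^ (D / 2) *
      (∑' n : ℕ,
        (Nat.choose ((n + D / 2 + 1) + D / 2) (D / 2) : ℝ) *
          (Nat.choose (n + D / 2) (D / 2) : ℝ) * x ^ (n + D / 2 + 1)) =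
    (-1 / (1 - x) ^ (D + 1)) *
      ∑ ℓ ∈ Finset.Icc (D / 2 + 1) (D + 1),
        (-1 : ℝ) ^ ℓ * (Nat.choose (D + 1) ℓ : ℝ) * x ^ ℓ := by
  obtain ⟨m, rfl⟩ := hEven
  rw [show (m + m) / 2 = m by omega, show m + m + 1 = 2 * m + 1 by ring]
  have hx : ‖x‖ < 1 := by rw [Real.norm_eq_abs, abs_lt]; constructor <;> linarith
  have key := pow_mul_one_sub_pow_mul_tsum_eval_mul_pow (natDegree_choosePairPoly_lt m)
    (by omega : 0 < m + 1) (choosePairPoly_eval_neg m) hx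
  rw [choosePairPoly_eval_neg_succ] at key
  have hseries : ∑' n : ℕ, ((n + m + 1 + m).choose m : ℝ) * ((n + m).choose m : ℝ) *
      x ^ (n + m + 1) =
      x ^ (m + 1) * (∑' n : ℕ, (choosePairPoly m).eval (n : ℝ) * x ^ n) /
        (m.factorial : ℝ) ^ 2 := by
    rw [← tsum_mul_left, ← tsum_div_const]
    refine tsum_congr fun n ↦ ?_
    rw [choosePairPoly_eval_natCast, show n + m + 1 + m = n + (2 * m + 1) by ring]
    field_simp
    ring
  have h1x : (1 - x) ^ (2 * m + 1) ≠ 0 := pow_ne_zero _ (by linarith)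
  have hsign : ((-1 : ℝ) ^ m) ^ 2 = 1 := by rw [← pow_mul, mul_comm, pow_mul, neg_one_sq, one_pow]
  rw [hseries]
  set T := ∑ ℓ ∈ Icc (m + 1) (2 * m + 1), (-1 : ℝ) ^ ℓ * ((2 * m + 1).choose ℓ : ℝ) * x ^ ℓ
  field_simp
  linear_combination (-1) ^ m * key - (m.factorial : ℝ) ^ 2 * T * hsign

theorem stmt_6 (D : ℕ) (hD : 0 < D) (hEven : Even D) (x : ℝ) (hx0 : 0 < x) (hx1 : x < 1) :
    (-1 : ℝ) ^ (D / 2) *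
      (∑' n : ℕ,
        (Nat.choose ((n + D / 2 + 1) + D / 2) (D / 2) : ℝ) *
          (Nat.choose (n + D / 2) (D / 2) : ℝ) * x ^ (n + D / 2 + 1)) =
    (-1 / (1 - x) ^ (D + 1)) *
      ∑ ℓ ∈ Finset.Icc (D / 2 + 1) (D + 1),
        (-1 : ℝ) ^ ℓ * (Nat.choose (D + 1) ℓ : ℝ) * x ^ ℓ :=
  stmt_6_general D hEven x hx0 hx1
end

section
/- Let D be a positive even integer and let B_{2m}, 1 ≤ m ≤ D/2, be the unique solution of the Vandermonde system ∑_{m=1}^{D/2} (-1)^m ℓ^{2m} B_{2m} = -1 for ℓ = 1, ..., D/2. Then B_2 = ∑_{m=1}^{D/2} 1/m². -/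
/-!
With `B m` standing for `B_{2m}` and `n = D / 2`, put `P(X) = 1 + ∑_{m=1}^n (-1)^m B_{2m} X^m`.
The system says `P(ℓ²) = 0` for `ℓ = 1, …, n`, and `P(0) = 1`. As `deg P ≤ n`, these `n + 1`
values force `P = ∏_{ℓ=1}^n (1 - X / ℓ²)`, and comparing the coefficients of `X` gives
`B_2 = ∑_{ℓ=1}^n 1 / ℓ²`.
-/

open Polynomial Finset

namespace Polynomial

variable {R : Type*} [CommRing R]

theorem coeff_one_prod_of_coeff_zero_eq_one {ι : Type*} {s : Finset ι} {f : ι → R[X]}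
    (h : ∀ i ∈ s, (f i).coeff 0 = 1) :
    (∏ i ∈ s, f i).coeff 1 = ∑ i ∈ s, (f i).coeff 1 := by
  classical
  induction s using Finset.induction_on with
  | empty => simp [coeff_one]
  | insert a s ha ih =>
    have hs : ∀ i ∈ s, (f i).coeff 0 = 1 := fun i hi => h i (mem_insert_of_mem hi)
    rw [prod_insert ha, sum_insert ha, mul_coeff_one, coeff_zero_prod, prod_eq_one hs,
      h a (mem_insert_self a s), ih hs]
    ring

theorem natDegree_prod_one_sub_C_mul_X_le {ι : Type*} (s : Finset ι) (c : ι → R) :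
    (∏ i ∈ s, (1 - C (c i) * X)).natDegree ≤ #s := by
  refine (natDegree_prod_le _ _).trans ?_
  rw [card_eq_sum_ones]
  exact sum_le_sum fun i _ => by compute_degree

theorem coeff_one_prod_one_sub_C_mul_X {ι : Type*} (s : Finset ι) (c : ι → R) :
    (∏ i ∈ s, (1 - C (c i) * X)).coeff 1 = -∑ i ∈ s, c i := by
  rw [coeff_one_prod_of_coeff_zero_eq_one fun i _ => by simp, ← sum_neg_distrib]
  simp [coeff_one]

noncomputable def alternatingPoly (B : ℕ → R) (n : ℕ) : R[X] :=
  1 + ∑ m ∈ Icc 1 n, C ((-1) ^ m * B m) * X ^ m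

theorem eval_alternatingPoly (B : ℕ → R) (n : ℕ) (x : R) :
    (alternatingPoly B n).eval x = 1 + ∑ m ∈ Icc 1 n, (-1) ^ m * x ^ m * B m := by
  simp only [alternatingPoly, eval_add, eval_one, eval_finsetSum, eval_mul, eval_C, eval_pow,
    eval_X]
  congr 1
  exact sum_congr rfl fun m _ => by ring

theorem natDegree_alternatingPoly_le (B : ℕ → R) (n : ℕ) :
    (alternatingPoly B n).natDegree ≤ n := by
  refine natDegree_add_le_of_degree_le (by simp) (natDegree_sum_le_of_forall_le _ _ fun m hm => ?_)
  exact (natDegree_C_mul_X_pow_le _ _).trans (mem_Icc.mp hm).2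

theorem coeff_one_alternatingPoly (B : ℕ → R) {n : ℕ} (hn : 1 ≤ n) :
    (alternatingPoly B n).coeff 1 = -B 1 := by
  rw [alternatingPoly, coeff_add, coeff_one, finsetSum_coeff,
    sum_eq_single_of_mem 1 (mem_Icc.mpr ⟨le_rfl, hn⟩)]
  · simp
  · intro m _ hm
    rw [coeff_C_mul_X_pow, if_neg (Ne.symm hm)]

theorem eval_zero_alternatingPoly (B : ℕ → R) (n : ℕ) : (alternatingPoly B n).eval 0 = 1 := by
  rw [eval_alternatingPoly, add_eq_left]
  exact sum_eq_zero fun m hm => by simp [zero_pow (Nat.one_le_iff_ne_zero.mp (mem_Icc.mp hm).1)]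

theorem alternatingPoly_eq_prod {K : Type*} [Field K] [CharZero K] {B : ℕ → K} {n : ℕ}
    (hB : ∀ ℓ ∈ Icc 1 n, ∑ m ∈ Icc 1 n, (-1) ^ m * (ℓ : K) ^ (2 * m) * B m = -1) :
    alternatingPoly B n = ∏ ℓ ∈ Icc 1 n, (1 - C ((ℓ : K) ^ 2)⁻¹ * X) := by
  have hsq : Function.Injective fun i : Fin (n + 1) => ((i : ℕ) : K) ^ 2 := by
    intro i j hij
    simp only at hij
    have hij : (i : ℕ) ^ 2 = (j : ℕ) ^ 2 := by exact_mod_cast hij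
    exact Fin.ext (Nat.pow_left_injective two_ne_zero hij)
  refine eq_of_natDegree_lt_card_of_eval_eq _ _ hsq (fun i => ?_) ?_
  · rcases Nat.eq_zero_or_pos i with hi | hi
    · simp [hi, eval_zero_alternatingPoly, eval_prod]
    · have hℓ : (i : ℕ) ∈ Icc 1 n := mem_Icc.mpr ⟨hi, Nat.le_of_lt_succ i.isLt⟩
      have hℓ0 : ((i : ℕ) : K) ^ 2 ≠ 0 := pow_ne_zero 2 (Nat.cast_ne_zero.mpr hi.ne')
      rw [eval_alternatingPoly, eval_prod, prod_eq_zero hℓ (by simp [inv_mul_cancel₀ hℓ0])]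
      simp_rw [← pow_mul]
      rw [hB _ hℓ, add_neg_cancel]
  · rw [Fintype.card_fin, Nat.lt_succ_iff]
    exact max_le (natDegree_alternatingPoly_le B n)
      ((natDegree_prod_one_sub_C_mul_X_le _ _).trans (Nat.card_Icc 1 n).le)

end Polynomial

theorem stmt_8 (D : ℕ) (hD : 0 < D) (hEven : Even D) (B : ℕ → ℝ)
    (hB : ∀ ℓ ∈ Finset.Icc 1 (D / 2),
      ∑ m ∈ Finset.Icc 1 (D / 2), (-1 : ℝ) ^ m * (ℓ : ℝ) ^ (2 * m) * B m = -1) :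
    B 1 = ∑ m ∈ Finset.Icc 1 (D / 2), 1 / (m : ℝ) ^ 2 := by
  have hD2 : 1 ≤ D / 2 := by
    obtain ⟨k, rfl⟩ := hEven
    omega
  have h := congrArg (coeff · 1) (alternatingPoly_eq_prod hB)
  simp only [coeff_one_alternatingPoly B hD2, coeff_one_prod_one_sub_C_mul_X, neg_inj] at h
  simpa only [one_div] using h
end

section
/- Suppose v is 2π-periodic, analytic, and satisfies |v(θ)| ≤ M in the half-plane Im θ > -a for some a > 0. Then the trapezoidal rule I_N = (2π/N) ∑_{j=1}^N v(2πj/N) satisfies |I_N - I| ≤ 2πM/(e^{aN} - 1), where I = ∫₀^{2π} v(θ) dθ. -/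
/-!
Write `c k` for the Fourier coefficients of `v` on `[0, 2π]`. Since `z ↦ e^{-ikz} v(z)` is
holomorphic and `2π`-periodic, Cauchy's theorem on a rectangle (whose vertical sides cancel) moves
the integral defining `c k` to the line `Im z = y` for any `y > -a`, giving
`‖c k‖ ≤ M e^{ky}`. Letting `y → -a` gives `‖c k‖ ≤ M e^{-ak}`, and for `k < 0` letting `y → ∞`
gives `c k = 0`. The Fourier series therefore converges absolutely, and sampling it at the `N`
equispaced nodes keeps exactly the coefficients of index divisible by `N` (aliasing):
`I_N = 2π ∑ₘ c (N m)`. Hence `I_N - I = 2π ∑_{m ≥ 1} c (N m)`, which is bounded by the geometric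
series `2πM ∑_{m ≥ 1} e^{-aNm} = 2πM / (e^{aN} - 1)`.
-/

open Complex Real Finset Filter Topology
open scoped Interval

lemma integral_add_mul_I_eq_of_periodic {E : Type*} [NormedAddCommGroup E] [NormedSpace ℂ E]
    [CompleteSpace E] {g : ℂ → E} {T y : ℝ}
    (hg : DifferentiableOn ℂ g ([[0, T]] ×ℂ [[0, y]]))
    (hper : ∀ t ∈ [[0, y]], g (T + t * I) = g (t * I)) :
    ∫ x in (0 : ℝ)..T, g (x + y * I) = ∫ x in (0 : ℝ)..T, g x := by
  have hrect := integral_boundary_rect_eq_zero_of_differentiableOn g 0 ⟨T, y⟩ hg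
  have hsides : ∫ t in (0 : ℝ)..y, g (T + t * I) = ∫ t in (0 : ℝ)..y, g (t * I) :=
    intervalIntegral.integral_congr hper
  simp only [zero_re, zero_im, ofReal_zero, zero_mul, add_zero, zero_add, hsides,
    add_sub_cancel_right, sub_eq_zero] at hrect
  exact hrect.symm

instance fact_zero_lt_two_pi : Fact (0 < 2 * π) := ⟨two_pi_pos⟩

lemma fourierCoeff_two_pi_eq_integral_exp_mul (F : AddCircle (2 * π) → ℂ) (k : ℤ) :
    fourierCoeff F k = (1 / (2 * π) : ℂ) * ∫ x in (0 : ℝ)..2 * π, exp (-(k * I * x)) * F x := by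
  rw [fourierCoeff_eq_intervalIntegral _ k 0, zero_add, real_smul]
  push_cast
  congr 1
  refine intervalIntegral.integral_congr fun x _ ↦ ?_
  rw [fourier_coe_apply, smul_eq_mul]
  congr 2
  field_simp
  push_cast
  ring

lemma norm_fourierCoeff_le_mul_exp {a M y : ℝ} (ha : 0 < a) (hy : -a < y) {v : ℂ → ℂ}
    (hv : DifferentiableOn ℂ v {z | -a < z.im})
    (hper : ∀ z : ℂ, -a < z.im → v (z + 2 * π) = v z)
    (hbd : ∀ z : ℂ, -a < z.im → ‖v z‖ ≤ M)
    {F : C(AddCircle (2 * π), ℂ)} (hFv : ∀ x : ℝ, F x = v x) (k : ℤ) :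
    ‖fourierCoeff F k‖ ≤ M * Real.exp (k * y) := by
  set g : ℂ → ℂ := fun z ↦ exp (-(k * I * z)) * v z with hg_def
  have hstrip : [[0, 2 * π]] ×ℂ [[0, y]] ⊆ {z | -a < z.im} := fun z hz ↦
    (lt_min (neg_neg_of_pos ha) hy).trans_le hz.2.1
  have hg : DifferentiableOn ℂ g ([[0, 2 * π]] ×ℂ [[0, y]]) :=
    (Differentiable.differentiableOn (by fun_prop)).mul (hv.mono hstrip)
  have hgper : ∀ t ∈ [[0, y]], g ((2 * π : ℝ) + t * I) = g (t * I) := by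
    intro t ht
    have hv_per := hper (t * I) (hstrip ⟨by simp [pi_pos.le], by simpa using ht⟩)
    have hexp_per : exp (-(k * I * ((2 * π : ℝ) + t * I))) = exp (-(k * I * (t * I))) := by
      rw [show -(k * I * ((2 * π : ℝ) + t * I)) = -(k * I * (t * I)) + (-k : ℤ) * (2 * π * I) by
        push_cast; ring, Complex.exp_add, exp_int_mul_two_pi_mul_I, mul_one]
    simp only [hg_def, hexp_per]
    rw [← hv_per, ofReal_mul, ofReal_ofNat, add_comm]
  have hcoeff : fourierCoeff F k = (1 / (2 * π) : ℂ) * ∫ x in (0 : ℝ)..2 * π, g x := by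
    simp_rw [fourierCoeff_two_pi_eq_integral_exp_mul, hFv, hg_def]
  have hbound : ∀ x ∈ Ι (0 : ℝ) (2 * π), ‖g (x + y * I)‖ ≤ Real.exp (k * y) * M := by
    intro x _
    rw [norm_mul, norm_exp]
    refine le_of_eq_of_le ?_ (mul_le_mul_of_nonneg_left (hbd (x + y * I) (by simpa using hy))
      (Real.exp_nonneg _))
    simp
  rw [hcoeff, ← integral_add_mul_I_eq_of_periodic hg hgper, norm_mul]
  calc ‖(1 / (2 * π) : ℂ)‖ * ‖∫ x in (0 : ℝ)..2 * π, g (x + y * I)‖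
      ≤ 1 / (2 * π) * (Real.exp (k * y) * M * |2 * π - 0|) := by
        gcongr
        · simp [abs_of_pos pi_pos]
        · exact intervalIntegral.norm_integral_le_of_norm_le_const hbound
    _ = M * Real.exp (k * y) := by
        rw [sub_zero, abs_of_pos two_pi_pos]
        field_simp

lemma le_mul_exp_of_forall_gt {x M k a : ℝ} (h : ∀ y, -a < y → x ≤ M * Real.exp (k * y)) :
    x ≤ M * Real.exp (k * -a) := by
  have hcont : Continuous fun y ↦ M * Real.exp (k * y) := by fun_prop
  exact ge_of_tendsto ((hcont.tendsto (-a)).mono_left nhdsWithin_le_nhds)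
    (eventually_nhdsWithin_of_forall (s := Set.Ioi (-a)) h)

lemma eq_zero_of_forall_norm_le_mul_exp {E : Type*} [NormedAddCommGroup E] {z : E} {M k a : ℝ}
    (hk : k < 0) (h : ∀ y, -a < y → ‖z‖ ≤ M * Real.exp (k * y)) : z = 0 := by
  have hlim : Tendsto (fun y ↦ M * Real.exp (k * y)) atTop (𝓝 0) := by
    simpa using (tendsto_exp_atBot.comp
      ((tendsto_const_mul_atBot_of_neg hk).mpr tendsto_id)).const_mul M
  exact norm_le_zero_iff.mp (ge_of_tendsto hlim ((eventually_gt_atTop (-a)).mono h))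

lemma sum_range_fourier_eq {T : ℝ} (hT : T ≠ 0) {N : ℕ} (hN : 0 < N) (i : ℤ) :
    ∑ j ∈ range N, fourier i ((j * T / N : ℝ) : AddCircle T) =
      if (N : ℤ) ∣ i then (N : ℂ) else 0 := by
  set ζ := exp (2 * π * I / N)
  have hζ : IsPrimitiveRoot ζ N := isPrimitiveRoot_exp N hN.ne'
  have hterm : ∀ j : ℕ, fourier i ((j * T / N : ℝ) : AddCircle T) = (ζ ^ i) ^ j := by
    intro j
    rw [fourier_coe_apply, ← exp_int_mul, ← Complex.exp_nat_mul]
    have hTc : (T : ℂ) ≠ 0 := ofReal_ne_zero.mpr hT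
    congr 1
    push_cast
    field_simp
  simp_rw [hterm]
  split_ifs with hdvd
  · simp [(hζ.zpow_eq_one_iff_dvd i).mpr hdvd]
  · have hne : ζ ^ i ≠ 1 := mt (hζ.zpow_eq_one_iff_dvd i).mp hdvd
    have hpow : (ζ ^ i) ^ N = 1 := by
      rw [← zpow_natCast, ← zpow_mul, mul_comm, zpow_mul, zpow_natCast, hζ.pow_eq_one, one_zpow]
    rw [geom_sum_eq hne, hpow, sub_self, zero_div]

lemma hasSum_fourierCoeff_mul_of_summable {T : ℝ} [hT : Fact (0 < T)] {f : C(AddCircle T, ℂ)}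
    (hf : Summable (fourierCoeff f)) {N : ℕ} (hN : 0 < N) :
    HasSum (fun m : ℤ ↦ fourierCoeff f (N * m))
      ((N : ℂ)⁻¹ * ∑ j ∈ range N, f ((j * T / N : ℝ) : AddCircle T)) := by
  have hnodes : HasSum (fun i : ℤ ↦ fourierCoeff f i *
      ∑ j ∈ range N, fourier i ((j * T / N : ℝ) : AddCircle T))
      (∑ j ∈ range N, f ((j * T / N : ℝ) : AddCircle T)) := by
    simp_rw [mul_sum]
    exact hasSum_sum fun j _ ↦ has_pointwise_sum_fourier_series_of_summable hf _
  simp_rw [sum_range_fourier_eq hT.out.ne' hN] at hnodes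
  have hNz : (N : ℤ) ≠ 0 := by exact_mod_cast hN.ne'
  rw [← (mul_right_injective₀ hNz).hasSum_iff] at hnodes
  · simpa [mul_comm, ← mul_assoc, hN.ne'] using hnodes.mul_left (N : ℂ)⁻¹
  · intro i hi
    rw [if_neg, mul_zero]
    rintro ⟨m, rfl⟩
    exact hi ⟨m, rfl⟩

lemma norm_trapezoid_sub_integral_le {T : ℝ} [hT : Fact (0 < T)] {f : C(AddCircle T, ℂ)}
    {M r : ℝ} (hr₀ : 0 ≤ r) (hr₁ : r < 1)
    (hneg : ∀ k : ℤ, k < 0 → fourierCoeff f k = 0)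
    (hpos : ∀ n : ℕ, ‖fourierCoeff f n‖ ≤ M * r ^ n) {N : ℕ} (hN : 0 < N) :
    ‖(T / N : ℂ) * ∑ j ∈ range N, f ((j * T / N : ℝ) : AddCircle T) - ∫ x in (0 : ℝ)..T, f x‖ ≤
      T * (M * r ^ N / (1 - r ^ N)) := by
  have hsum : Summable (fourierCoeff f) := by
    refine Summable.of_nat_of_neg_add_one ?_ ?_
    · exact Summable.of_norm_bounded ((summable_geometric_of_lt_one hr₀ hr₁).mul_left M) hpos
    · simp only [fun n : ℕ ↦ hneg (-(n + 1)) (by omega), summable_zero]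
  have hℕ : HasSum (fun n : ℕ ↦ fourierCoeff f (N * n))
      ((N : ℂ)⁻¹ * ∑ j ∈ range N, f ((j * T / N : ℝ) : AddCircle T)) := by
    refine (Nat.cast_injective.hasSum_iff fun m hm ↦ hneg _ ?_).mpr
      (hasSum_fourierCoeff_mul_of_summable hsum hN)
    have hm₀ : m < 0 := by
      by_contra! h
      exact hm ⟨m.toNat, Int.toNat_of_nonneg h⟩
    exact mul_neg_of_pos_of_neg (by exact_mod_cast hN) hm₀
  have hgeom : ∀ n : ℕ, ‖fourierCoeff f (N * n)‖ ≤ M * (r ^ N) ^ n := fun n ↦ by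
    simpa [← pow_mul] using hpos (N * n)
  have herr := norm_sub_le_of_geometric_bound_of_hasSum (pow_lt_one₀ hr₀ hr₁ hN.ne') hgeom hℕ 1
  have hint : ∫ x in (0 : ℝ)..T, f x = T * fourierCoeff f 0 := by
    have hTc : (T : ℂ) ≠ 0 := ofReal_ne_zero.mpr hT.out.ne'
    rw [fourierCoeff_eq_intervalIntegral f 0 0, zero_add, neg_zero]
    simp only [fourier_zero, one_smul, real_smul, one_div, ofReal_inv]
    field_simp
  simp only [sum_range_one, Nat.cast_zero, mul_zero, pow_one] at herr
  rw [hint]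
  set S := ∑ j ∈ range N, f ((j * T / N : ℝ) : AddCircle T)
  set c₀ := fourierCoeff f 0
  calc ‖(T / N : ℂ) * S - T * c₀‖ = T * ‖c₀ - (N : ℂ)⁻¹ * S‖ := by
        rw [show (T / N : ℂ) * S - T * c₀ = -(T * (c₀ - (N : ℂ)⁻¹ * S)) by ring, norm_neg,
          norm_mul, norm_real, Real.norm_of_nonneg hT.out.le]
    _ ≤ T * (M * r ^ N / (1 - r ^ N)) := mul_le_mul_of_nonneg_left herr hT.out.le

lemma sum_Icc_one_eq_sum_range {M : Type*} [AddCommMonoid M] {g : ℕ → M} {N : ℕ} (hN : 0 < N)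
    (h : g N = g 0) : ∑ j ∈ Icc 1 N, g j = ∑ j ∈ range N, g j := by
  rw [← Ico_add_one_right_eq_Icc, sum_Ico_succ_top hN, sum_range_eq_add_Ico g hN, h, add_comm]

theorem stmt_13 (a M : ℝ) (ha : 0 < a) (v : ℂ → ℂ)
    (hv : AnalyticOn ℂ v {θ : ℂ | -a < θ.im})
    (hper : ∀ θ : ℂ, -a < θ.im → v (θ + 2 * Real.pi) = v θ)
    (hbd : ∀ θ : ℂ, -a < θ.im → ‖v θ‖ ≤ M)
    (N : ℕ) (hN : 0 < N) :
    ‖(2 * Real.pi / N : ℂ) * (∑ j ∈ Finset.Icc 1 N, v (2 * Real.pi * j / N)) -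
        ∫ θ in (0:ℝ)..(2 * Real.pi), v θ‖ ≤
      2 * Real.pi * M / (Real.exp (a * N) - 1) := by
  have hreal : ∀ x : ℝ, -a < (x : ℂ).im := fun x ↦ by simpa using ha
  have hper_real : Function.Periodic (fun x : ℝ ↦ v x) (2 * π) := fun x ↦ by
    simpa using hper x (hreal x)
  let F : C(AddCircle (2 * π), ℂ) := ⟨hper_real.lift, continuous_coinduced_dom.mpr
    (hv.continuousOn.comp_continuous continuous_ofReal hreal)⟩
  have hFv : ∀ x : ℝ, F x = v x := fun x ↦ hper_real.lift_coe x
  have hcoeff : ∀ (k : ℤ) (y : ℝ), -a < y → ‖fourierCoeff F k‖ ≤ M * Real.exp (k * y) :=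
    fun k y hy ↦ norm_fourierCoeff_le_mul_exp ha hy hv.differentiableOn hper hbd hFv k
  have herr := norm_trapezoid_sub_integral_le (Real.exp_nonneg (-a))
    (Real.exp_lt_one_iff.mpr (neg_neg_of_pos ha))
    (fun k hk ↦ eq_zero_of_forall_norm_le_mul_exp (by exact_mod_cast hk) (hcoeff k))
    (fun n ↦ by simpa [← Real.exp_nat_mul, mul_comm] using le_mul_exp_of_forall_gt (hcoeff n)) hN
  have hsum : ∑ j ∈ Icc 1 N, v (2 * π * j / N) = ∑ j ∈ range N, F ((j * (2 * π) / N : ℝ)) := by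
    rw [← sum_Icc_one_eq_sum_range hN]
    · refine sum_congr rfl fun j _ ↦ ?_
      rw [hFv]
      push_cast
      ring_nf
    · simp [hN.ne', AddCircle.coe_period]
  have hint : ∫ θ in (0 : ℝ)..2 * π, v θ = ∫ θ in (0 : ℝ)..2 * π, F θ :=
    intervalIntegral.integral_congr fun θ _ ↦ (hFv θ).symm
  have hexp : Real.exp (-a) ^ N = (Real.exp (a * N))⁻¹ := by
    rw [← Real.exp_nat_mul, ← Real.exp_neg]
    ring_nf
  have hgt : 1 < Real.exp (a * N) := Real.one_lt_exp_iff.mpr (by positivity)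
  push_cast at herr
  rw [hsum, hint]
  refine herr.trans_eq ?_
  rw [hexp]
  field_simp
end

section
/- For the function v(θ) = e^{i(D+1)Nθ} with D, N positive integers, the derivative-corrected trapezoidal rule with coefficients A_{k,D} determined by the Stirling-number formula gives I_{N,D} - I = 2π(-1)^D, where I = ∫₀^{2π} v = 0. In particular, I_{N,D} = (2π/N) ∑_{j=1}^N ∑_{k=0}^D N^{-k} A_{k,D} v^{(k)}(2πj/N) = 2π(-1)^D. -/
open Complex Real

/-- Signed Stirling numbers of the first kind, defined by the recurrence
`s(n+1,k) = s(n,k-1) - n·s(n,k)` with `s(0,0) = 1`. -/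
def stirlingFirst : ℕ → ℕ → ℚ
  | 0, 0 => 1
  | 0, _ + 1 => 0
  | n + 1, 0 => -(n : ℚ) * stirlingFirst n 0
  | n + 1, k + 1 => stirlingFirst n k - (n : ℚ) * stirlingFirst n (k + 1)

/-! At a node `2πj/N` the exponent `i(D+1)Nθ` is an integer multiple of `2πi`, so the `k`-th
derivative of `v` there is `(i(D+1)N)^k`; the weight `N^{-k}` cancels `N^k`, and every node
contributes `∑_k (i(D+1))^k A_k = ((-1)^D/D!) ∑_k s(D+1,k+1) (D+1)^k`. Since `∑_k s(n,k) x^k` is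
the falling factorial `x(x-1)⋯(x-n+1)`, the last sum is `(D+1)!/(D+1) = D!`, so each of the `N`
nodes contributes `(-1)^D`. -/

open Finset Polynomial
open scoped Nat

lemma stirlingFirst_succ_zero (n : ℕ) : stirlingFirst (n + 1) 0 = 0 := by
  induction n with
  | zero => simp [stirlingFirst]
  | succ n ih => rw [stirlingFirst, ih, mul_zero]

lemma stirlingFirst_eq_zero_of_lt {n k : ℕ} (h : n < k) : stirlingFirst n k = 0 := by
  induction n generalizing k with
  | zero => obtain ⟨k, rfl⟩ := Nat.exists_eq_add_one.mpr h; rfl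
  | succ n ih =>
    obtain ⟨k, rfl⟩ := Nat.exists_eq_add_one.mpr (Nat.zero_lt_of_lt h)
    rw [stirlingFirst, ih (by omega), ih (by omega), mul_zero, sub_zero]

theorem sum_stirlingFirst_mul_pow {K : Type*} [DivisionRing K] [CharZero K] (n : ℕ) (x : K) :
    ∑ k ∈ range (n + 1), (stirlingFirst n k : K) * x ^ k = (descPochhammer K n).eval x := by
  induction n with
  | zero => simp [stirlingFirst]
  | succ n ih =>
    have hshift : ∑ k ∈ range (n + 1), (stirlingFirst n (k + 1) : K) * x ^ (k + 1)
        = ∑ k ∈ range (n + 1), (stirlingFirst n k : K) * x ^ k - stirlingFirst n 0 := by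
      have h := sum_range_succ' (fun k => (stirlingFirst n k : K) * x ^ k) (n + 1)
      rw [sum_range_succ, stirlingFirst_eq_zero_of_lt (Nat.lt_succ_self n)] at h
      simp only [Rat.cast_zero, zero_mul, add_zero, pow_zero, mul_one] at h
      rw [h, add_sub_cancel_right]
    have hrec : ∀ k, (stirlingFirst (n + 1) (k + 1) : K) * x ^ (k + 1) =
        stirlingFirst n k * x ^ k * x - n * (stirlingFirst n (k + 1) * x ^ (k + 1)) := by
      intro k
      rw [stirlingFirst, Rat.cast_sub, Rat.cast_mul, Rat.cast_natCast, sub_mul, pow_succ,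
        mul_assoc, mul_assoc]
    rw [sum_range_succ', descPochhammer_succ_eval, ← ih, sum_congr rfl fun k _ => hrec k,
      sum_sub_distrib, ← sum_mul, ← mul_sum, hshift,
      stirlingFirst.eq_3, Rat.cast_mul, Rat.cast_neg, Rat.cast_natCast, pow_zero, mul_one, mul_sub,
      mul_sub, (Nat.cast_commute n _).eq, neg_mul]
    abel

theorem sum_stirlingFirst_succ_mul_pow_succ {K : Type*} [DivisionRing K] [CharZero K] (n : ℕ) :
    ∑ k ∈ range (n + 1), (stirlingFirst (n + 1) (k + 1) : K) * ((n : K) + 1) ^ k = n ! := by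
  have hfalling : ((n : K) + 1) * ∑ k ∈ range (n + 1),
      (stirlingFirst (n + 1) (k + 1) : K) * ((n : K) + 1) ^ k = (n + 1)! := by
    have h := sum_stirlingFirst_mul_pow (n + 1) ((n : K) + 1)
    rw [sum_range_succ', stirlingFirst_succ_zero, Rat.cast_zero, zero_mul, add_zero] at h
    rw [mul_sum, ← Nat.descFactorial_self, ← descPochhammer_eval_eq_descFactorial, Nat.cast_succ,
      ← h]
    exact sum_congr rfl fun k _ => by rw [pow_succ', (Rat.cast_commute _ _).left_comm]
  rw [Nat.factorial_succ, Nat.cast_mul, Nat.cast_succ] at hfalling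
  exact mul_left_cancel₀ (Nat.cast_add_one_ne_zero n) hfalling

theorem iteratedDeriv_cexp_at_node (m : ℤ) {N : ℕ} (hN : N ≠ 0) (k : ℕ) (j : ℤ) :
    iteratedDeriv k (fun θ : ℂ => exp (I * m * N * θ)) (2 * π * j / N) = (I * m * N) ^ k := by
  have hperiod : I * m * N * (2 * π * j / N) = (m * j : ℤ) * (2 * π * I) := by
    field_simp
    push_cast
    ring
  simp only [iteratedDeriv_cexp_const_mul]
  rw [hperiod, exp_int_mul_two_pi_mul_I, mul_one]

theorem sum_corrected_trapezoid_cexp (m : ℤ) {N : ℕ} (hN : N ≠ 0) (s : Finset ℕ) (A : ℕ → ℂ) :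
    ∑ j ∈ Icc 1 N, ∑ k ∈ s,
        (1 / (N : ℂ)) ^ k * A k * iteratedDeriv k (fun θ => exp (I * m * N * θ)) (2 * π * j / N) =
      N * ∑ k ∈ s, (I * m) ^ k * A k := by
  have hnode : ∀ j : ℕ, ∀ k, (1 / (N : ℂ)) ^ k * A k *
      iteratedDeriv k (fun θ => exp (I * m * N * θ)) (2 * π * j / N) = (I * m) ^ k * A k := by
    intro j k
    have hNc : (N : ℂ) ≠ 0 := Nat.cast_ne_zero.mpr hN
    rw [← Int.cast_natCast j, iteratedDeriv_cexp_at_node m hN, mul_pow, one_div, inv_pow]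
    field_simp
  simp only [hnode, sum_const, Nat.card_Icc, Nat.add_sub_cancel, nsmul_eq_mul]

theorem sum_I_mul_pow_mul_eq_neg_one_pow (D : ℕ) (A : ℕ → ℂ)
    (hA : ∀ k ≤ D, I ^ k * A k = (-1) ^ D / D ! * (stirlingFirst (D + 1) (k + 1) : ℂ)) :
    ∑ k ∈ range (D + 1), (I * ((D : ℂ) + 1)) ^ k * A k = (-1) ^ D := by
  have hterm : ∀ k ∈ range (D + 1), (I * ((D : ℂ) + 1)) ^ k * A k =
      (-1) ^ D / D ! * ((stirlingFirst (D + 1) (k + 1) : ℂ) * ((D : ℂ) + 1) ^ k) := by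
    intro k hk
    rw [mul_pow, mul_right_comm, hA k (Nat.lt_succ_iff.mp (mem_range.mp hk)), mul_assoc]
  rw [sum_congr rfl hterm, ← mul_sum, sum_stirlingFirst_succ_mul_pow_succ,
    div_mul_cancel₀ _ (Nat.cast_ne_zero.mpr (Nat.factorial_ne_zero D))]

theorem stmt_16_general (D N : ℕ) (hN : 0 < N) (A : ℕ → ℂ)
    (hA : ∀ k, k ≤ D → Complex.I ^ k * A k =
      ((-1 : ℂ) ^ D / (Nat.factorial D : ℂ)) * (stirlingFirst (D + 1) (k + 1) : ℂ))
    (v : ℂ → ℂ) (hv : v = fun θ => Complex.exp (Complex.I * ((D : ℂ) + 1) * N * θ)) :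
    (2 * Real.pi / N : ℂ) *
        (∑ j ∈ Finset.Icc 1 N, ∑ k ∈ Finset.range (D + 1),
          (1 / (N : ℂ)) ^ k * A k * iteratedDeriv k v (2 * Real.pi * j / N)) =
      2 * Real.pi * (-1 : ℂ) ^ D := by
  have hm : (D : ℂ) + 1 = ((D + 1 : ℤ) : ℂ) := by push_cast; rfl
  rw [hv, hm, sum_corrected_trapezoid_cexp _ hN.ne', ← hm, sum_I_mul_pow_mul_eq_neg_one_pow D A hA]
  have hNc : (N : ℂ) ≠ 0 := Nat.cast_ne_zero.mpr hN.ne'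
  field_simp

theorem stmt_16 (D N : ℕ) (hD : 0 < D) (hN : 0 < N) (A : ℕ → ℂ)
    (hA : ∀ k, k ≤ D → Complex.I ^ k * A k =
      ((-1 : ℂ) ^ D / (Nat.factorial D : ℂ)) * (stirlingFirst (D + 1) (k + 1) : ℂ))
    (v : ℂ → ℂ) (hv : v = fun θ => Complex.exp (Complex.I * ((D : ℂ) + 1) * N * θ)) :
    (2 * Real.pi / N : ℂ) *
        (∑ j ∈ Finset.Icc 1 N, ∑ k ∈ Finset.range (D + 1),
          (1 / (N : ℂ)) ^ k * A k * iteratedDeriv k v (2 * Real.pi * j / N)) =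
      2 * Real.pi * (-1 : ℂ) ^ D :=
  stmt_16_general D N hN A hA v hv
end

section
/- For the function v(θ) = 2cos((D/2+1)Nθ) with D a positive even integer and N a positive integer, the derivative-corrected trapezoidal rule I_{N,D} with even-derivative coefficients B_{2m,D} (odd coefficients zero) satisfies I_{N,D} - I = 4π(-1)^{D/2} C(D+1, D/2), where I = ∫₀^{2π} v = 0. -/
open Complex Real Finset

/-!
Write `ℓ = D/2 + 1`, so that `v θ = exp (i ℓ N θ) + exp (-i ℓ N θ)`. Both exponentials equal `1`
at every node `2πj/N`, hence there `N^{-k} v^{(k)} = (iℓ)^k + (-iℓ)^k`: the odd orders cancel and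
the order `2m` gives `2 (-1)^m ℓ^{2m}`. By the defining identity of the `B_{2m,D}` every node
therefore contributes `2 ∏_{m ≤ D/2} (1 - (ℓ/m)²)`, and this product splits into
`∏ (1 - ℓ/m) = (-1)^{D/2}` and `∏ (1 + ℓ/m) = C(D+1, D/2)`. The exact integral vanishes since
`ℓ N` is a nonzero integer.
-/

theorem iteratedDeriv_two_mul_cos_const_mul (n : ℕ) (c : ℂ) :
    iteratedDeriv n (fun θ : ℂ => 2 * cos (c * θ)) =
      fun θ => (c * I) ^ n * exp (c * I * θ) + (-(c * I)) ^ n * exp (-(c * I) * θ) := by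
  have h : (fun θ : ℂ => 2 * cos (c * θ)) = fun θ => exp (c * I * θ) + exp (-(c * I) * θ) := by
    funext θ; rw [two_cos]; ring_nf
  funext θ
  rw [h, iteratedDeriv_fun_add (by fun_prop) (by fun_prop)]
  rw [iteratedDeriv_cexp_const_mul, iteratedDeriv_cexp_const_mul]

theorem sum_range_mul_pow_add_neg_pow {R : Type*} [CommRing R] (c : ℕ → R) (x : R) (n : ℕ) :
    ∑ k ∈ range (2 * n + 1), c k * (x ^ k + (-x) ^ k) =
      2 * ∑ m ∈ range (n + 1), c (2 * m) * x ^ (2 * m) := by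
  induction n with
  | zero => simp [one_add_one_eq_two, mul_comm]
  | succ n ih =>
    rw [show 2 * (n + 1) + 1 = 2 * n + 1 + 1 + 1 by ring, sum_range_succ, sum_range_succ, ih,
      sum_range_succ _ (n + 1), Odd.neg_pow ⟨n, rfl⟩, show 2 * n + 1 + 1 = 2 * (n + 1) by ring,
      Even.neg_pow ⟨n + 1, by ring⟩]
    ring

theorem prod_one_add_div_eq_choose (n s : ℕ) :
    ∏ m ∈ Icc 1 s, (1 + (n : ℝ) / m) = (n + s).choose s := by
  induction s with
  | zero => simp
  | succ s ih =>
    rw [prod_Icc_succ_top (by omega), ih]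
    have key : ((n + s + 1).choose (s + 1) : ℝ) * (s + 1) = (n + s + 1) * (n + s).choose s := by
      exact_mod_cast (Nat.add_one_mul_choose_eq (n + s) s).symm
    rw [← add_assoc]
    field_simp
    push_cast
    linear_combination -key

theorem prod_one_sub_succ_div_eq_neg_one_pow (s : ℕ) :
    ∏ m ∈ Icc 1 s, (1 - ((s : ℝ) + 1) / m) = (-1) ^ s := by
  have reflect : ∏ m ∈ Icc 1 s, ((s : ℝ) + 1 - m) = ∏ m ∈ Icc 1 s, (m : ℝ) := by
    refine prod_nbij' (fun m => s + 1 - m) (fun m => s + 1 - m) ?_ ?_ ?_ ?_ fun m hm => ?_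
    any_goals (intro m hm; simp only [mem_Icc] at hm ⊢; omega)
    simp only [mem_Icc] at hm
    push_cast [show m ≤ s + 1 by omega]
    ring
  have hprod : ∏ m ∈ Icc 1 s, (m : ℝ) ≠ 0 := prod_ne_zero_iff.mpr fun m hm => by
    simp only [mem_Icc] at hm; exact Nat.cast_ne_zero.mpr (by omega)
  calc ∏ m ∈ Icc 1 s, (1 - ((s : ℝ) + 1) / m)
      = ∏ m ∈ Icc 1 s, ((-1 : ℝ) * (((s : ℝ) + 1 - m) / m)) := prod_congr rfl fun m hm => by
        have hm0 : (m : ℝ) ≠ 0 := Nat.cast_ne_zero.mpr (by simp only [mem_Icc] at hm; omega)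
        field_simp
        ring
    _ = (-1) ^ s := by
      rw [prod_mul_distrib, prod_const, Nat.card_Icc, prod_div_distrib, reflect, div_self hprod]
      simp

theorem prod_one_sub_succ_div_sq (s : ℕ) :
    ∏ m ∈ Icc 1 s, (1 - (((s : ℝ) + 1) / m) ^ 2) = (-1) ^ s * ((2 * s + 1).choose s : ℝ) := by
  have h := prod_one_add_div_eq_choose (s + 1) s
  rw [show s + 1 + s = 2 * s + 1 by ring, Nat.cast_succ] at h
  rw [← prod_one_sub_succ_div_eq_neg_one_pow, ← h, ← prod_mul_distrib]
  exact prod_congr rfl fun m _ => by ring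

theorem integral_two_mul_cos_nat_mul (n : ℕ) (hn : n ≠ 0) :
    ∫ θ in (0 : ℝ)..2 * π, 2 * cos ((n : ℂ) * θ) = 0 := by
  rw [intervalIntegral.integral_const_mul, integral_cos_mul_complex (by exact_mod_cast hn)]
  have : (n : ℂ) * ((2 * π : ℝ) : ℂ) = ((2 * n : ℕ) : ℤ) * π := by push_cast; ring
  rw [this, Complex.ofReal_zero, mul_zero, Complex.sin_int_mul_pi, Complex.sin_zero]
  simp

theorem inv_pow_mul_iteratedDeriv_two_mul_cos_at_node (a N j n : ℕ) (hN : N ≠ 0) :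
    (1 / (N : ℂ)) ^ n * iteratedDeriv n (fun θ : ℂ => 2 * cos (a * N * θ)) (2 * π * j / N) =
      (a * I) ^ n + (-(a * I)) ^ n := by
  have hN' : (N : ℂ) ≠ 0 := Nat.cast_ne_zero.mpr hN
  have hplus : (a * N : ℂ) * I * (2 * π * j / N) = ((a * j : ℕ) : ℤ) * (2 * π * I) := by
    push_cast; field_simp
  have hminus : -((a * N : ℂ) * I) * (2 * π * j / N) = ((-(a * j : ℕ) : ℤ)) * (2 * π * I) := by
    push_cast; field_simp
  rw [iteratedDeriv_two_mul_cos_const_mul]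
  beta_reduce
  rw [hplus, hminus, exp_int_mul_two_pi_mul_I, exp_int_mul_two_pi_mul_I, mul_one, mul_one,
    mul_add, ← mul_pow, ← mul_pow]
  congr 2 <;> field_simp

theorem sum_range_mul_iteratedDeriv_two_mul_cos_at_node (a N j s : ℕ) (hN : N ≠ 0)
    (B : ℕ → ℝ) :
    ∑ k ∈ range (2 * s + 1), (1 / (N : ℂ)) ^ k * (B k : ℂ) *
        iteratedDeriv k (fun θ : ℂ => 2 * cos (a * N * θ)) (2 * π * j / N) =
      2 * ((∑ m ∈ range (s + 1), (-1 : ℝ) ^ m * (a : ℝ) ^ (2 * m) * B (2 * m) : ℝ) : ℂ) := by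
  calc _ = ∑ k ∈ range (2 * s + 1), (B k : ℂ) * ((a * I) ^ k + (-(a * I)) ^ k) :=
        sum_congr rfl fun k _ => by
          rw [← inv_pow_mul_iteratedDeriv_two_mul_cos_at_node a N j k hN]
          ring
    _ = _ := by
      rw [sum_range_mul_pow_add_neg_pow]
      push_cast
      refine congrArg _ (sum_congr rfl fun m _ => ?_)
      rw [mul_pow, pow_mul I, I_sq]
      ring

theorem stmt_17_general (D N : ℕ) (hEven : Even D) (hN : 0 < N) (B : ℕ → ℝ)
    (hBeven : ∀ ℓ : ℝ,
      ∑ m ∈ Finset.range (D / 2 + 1), (-1 : ℝ) ^ m * ℓ ^ (2 * m) * B (2 * m) =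
        ∏ m ∈ Finset.Icc 1 (D / 2), (1 - (ℓ / m) ^ 2))
    (v : ℂ → ℂ) (hv : v = fun θ => 2 * Complex.cos (((D / 2 : ℕ) + 1 : ℂ) * N * θ)) :
    (2 * Real.pi / N : ℂ) *
        (∑ j ∈ Finset.Icc 1 N, ∑ k ∈ Finset.range (D + 1),
          (1 / (N : ℂ)) ^ k * (B k : ℂ) * iteratedDeriv k v (2 * Real.pi * j / N)) -
        ∫ θ in (0:ℝ)..(2 * Real.pi), v θ =
      4 * Real.pi * (-1 : ℂ) ^ (D / 2) * (Nat.choose (D + 1) (D / 2) : ℂ) := by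
  obtain ⟨s, rfl⟩ := hEven.two_dvd
  rw [show 2 * s / 2 = s by omega] at hBeven hv ⊢
  subst hv
  have hnode : ∀ j ∈ Icc 1 N, ∑ k ∈ range (2 * s + 1), (1 / (N : ℂ)) ^ k * (B k : ℂ) *
      iteratedDeriv k (fun θ : ℂ => 2 * cos ((s + 1 : ℂ) * N * θ)) (2 * π * j / N) =
        2 * (-1) ^ s * (2 * s + 1).choose s := fun j _ => by
    have h := sum_range_mul_iteratedDeriv_two_mul_cos_at_node (s + 1) N j s hN.ne' B
    simp only [Nat.cast_succ] at h
    rw [h, hBeven, prod_one_sub_succ_div_sq]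
    push_cast
    ring
  have hintegral : ∫ θ in (0 : ℝ)..2 * π, 2 * cos ((s + 1 : ℂ) * N * θ) = 0 := by
    have h := integral_two_mul_cos_nat_mul ((s + 1) * N) (by positivity)
    push_cast at h
    exact h
  have hN' : (N : ℂ) ≠ 0 := Nat.cast_ne_zero.mpr hN.ne'
  rw [sum_congr rfl hnode, hintegral, sum_const, Nat.card_Icc, Nat.add_sub_cancel, nsmul_eq_mul]
  field_simp
  ring

theorem stmt_17 (D N : ℕ) (hD : 0 < D) (hEven : Even D) (hN : 0 < N) (B : ℕ → ℝ)
    (hB0 : B 0 = 1)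
    (hBodd : ∀ m, 1 ≤ m → m ≤ D / 2 → B (2 * m - 1) = 0)
    (hBeven : ∀ ℓ : ℝ,
      ∑ m ∈ Finset.range (D / 2 + 1), (-1 : ℝ) ^ m * ℓ ^ (2 * m) * B (2 * m) =
        ∏ m ∈ Finset.Icc 1 (D / 2), (1 - (ℓ / m) ^ 2))
    (v : ℂ → ℂ) (hv : v = fun θ => 2 * Complex.cos (((D / 2 : ℕ) + 1 : ℂ) * N * θ)) :
    (2 * Real.pi / N : ℂ) *
        (∑ j ∈ Finset.Icc 1 N, ∑ k ∈ Finset.range (D + 1),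
          (1 / (N : ℂ)) ^ k * (B k : ℂ) * iteratedDeriv k v (2 * Real.pi * j / N)) -
        ∫ θ in (0:ℝ)..(2 * Real.pi), v θ =
      4 * Real.pi * (-1 : ℂ) ^ (D / 2) * (Nat.choose (D + 1) (D / 2) : ℂ) :=
  stmt_17_general D N hEven hN B hBeven v hv
end
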